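/- arXiv:1903.07242 — 4 statements merged into one kernel-verified Lean document; each statement's English description precedes it below -/
import Mathlib

section
/- The set GDer(T) of homogeneous generalized k-derivations (over all nonnegative integers k) of a δ-Jordan Lie supertriple system T is closed under the supercommutator [D₁,D₂] = D₁D₂ - (-1)^{|D₁||D₂|}D₂D₁; more precisely, if D₁ is a generalized k-derivation with associated maps D₁', D₁'', D₁''' and D₂ is a generalized l-derivation with associated maps D₂', D₂'', D₂''', then [D₁,D₂] is a generalized (k+l)-derivation with associated maps [D₁',D₂'], [D₁'',D₂''], [D₁''',D₂''']. -/
/-!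
Expanding `D₁'''(D₂'''[a,b,c])` by the two defining identities gives nine terms. The three in
which both operators hit the same argument are those of the claimed identity for `[D₁,D₂]`;
the six mixed terms reappear in `D₂'''(D₁'''[a,b,c])` with the extra sign
`(-1)^{|D₁||D₂|}` and so cancel in the supercommutator.
-/

/-- The sign `(-1)^{ij}` for degrees `i, j ∈ ℤ/2`, valued in the field `k`. -/
def sgn (k : Type) [Field k] (i j : ZMod 2) : k := (-1 : k) ^ (i.val * j.val)

/-- A `δ`-Jordan Lie supertriple system: a `ℤ/2`-graded vector space `M` over `k`
with a trilinear product satisfying the four graded axioms. -/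
structure DJLSTS (k : Type) [Field k] (M : Type) [AddCommGroup M] [Module k M] (δ : k) where
  grade : ZMod 2 → Submodule k M
  direct : DirectSum.IsInternal grade
  br : M →ₗ[k] M →ₗ[k] M →ₗ[k] M
  delta_pm : δ = 1 ∨ δ = -1
  grade_br : ∀ {i j l : ZMod 2} {a b c : M},
      a ∈ grade i → b ∈ grade j → c ∈ grade l → br a b c ∈ grade (i + j + l)
  skew : ∀ {i j : ZMod 2} {a b : M}, a ∈ grade i → b ∈ grade j → ∀ c : M,
      br b a c = -((δ * sgn k i j) • br a b c)
  cyclic : ∀ {i j l : ZMod 2} {a b c : M},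
      a ∈ grade i → b ∈ grade j → c ∈ grade l →
      sgn k i l • br a b c + sgn k j i • br b c a + sgn k l j • br c a b = 0
  fund : ∀ {i j l m : ZMod 2} {a b c d : M},
      a ∈ grade i → b ∈ grade j → c ∈ grade l → d ∈ grade m → ∀ e : M,
      br a b (br c d e) = br (br a b c) d e + sgn k l (i + j) • br c (br a b d) e
        + (δ * sgn k (i + j) (l + m)) • br c d (br a b e)

/-- A `δ`-Jordan Lie superalgebra. -/
structure DJLSA (k : Type) [Field k] (M : Type) [AddCommGroup M] [Module k M] (δ : k) where
  grade : ZMod 2 → Submodule k M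
  direct : DirectSum.IsInternal grade
  br2 : M →ₗ[k] M →ₗ[k] M
  delta_pm : δ = 1 ∨ δ = -1
  grade_br2 : ∀ {i j : ZMod 2} {a b : M},
      a ∈ grade i → b ∈ grade j → br2 a b ∈ grade (i + j)
  skew2 : ∀ {i j : ZMod 2} {a b : M}, a ∈ grade i → b ∈ grade j →
      br2 b a = -((δ * sgn k i j) • br2 a b)
  jacobi : ∀ {i j l : ZMod 2} {a b c : M},
      a ∈ grade i → b ∈ grade j → c ∈ grade l →
      (δ * sgn k i l) • br2 (br2 a b) c + (δ * sgn k j i) • br2 (br2 b c) a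
        + (δ * sgn k l j) • br2 (br2 c a) b = 0

/-- An (ungraded) `δ`-Jordan Lie triple system. -/
structure DJLTS (k : Type) [Field k] (W : Type) [AddCommGroup W] [Module k W] (δ : k) where
  br : W →ₗ[k] W →ₗ[k] W →ₗ[k] W
  delta_pm : δ = 1 ∨ δ = -1
  skew : ∀ a b c : W, br b a c = -(δ • br a b c)
  cyclic : ∀ a b c : W, br a b c + br b c a + br c a b = 0
  fund : ∀ a b c d e : W,
      br a b (br c d e) = br (br a b c) d e + br c (br a b d) e + δ • br c d (br a b e)

variable {k : Type} [Field k] {M : Type} [AddCommGroup M] [Module k M] {δ : k}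
variable {W : Type} [AddCommGroup W] [Module k W]

/-- `D` is homogeneous of degree `s` with respect to the grading of `S`. -/
def IsHomog (S : DJLSTS k M δ) (s : ZMod 2) (D : M →ₗ[k] M) : Prop :=
  ∀ (i : ZMod 2) (a : M), a ∈ S.grade i → D a ∈ S.grade (s + i)

/-- Supercommutator `[D₁,D₂] = D₁D₂ - (-1)^{|D₁||D₂|} D₂D₁` of homogeneous operators
of degrees `s₁`, `s₂`. -/
def scomm (s₁ s₂ : ZMod 2) (D₁ D₂ : M →ₗ[k] M) : M →ₗ[k] M :=
  D₁ ∘ₗ D₂ - sgn k s₁ s₂ • (D₂ ∘ₗ D₁)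

/-- Homogeneous `n`-derivation of degree `s`. -/
def IsDer (S : DJLSTS k M δ) (n : ℕ) (s : ZMod 2) (D : M →ₗ[k] M) : Prop :=
  IsHomog S s D ∧ ∀ {i j : ZMod 2} {a b : M}, a ∈ S.grade i → b ∈ S.grade j → ∀ c : M,
    δ ^ n • S.br (D a) b c + (δ ^ n * sgn k s i) • S.br a (D b) c
      + (δ ^ n * sgn k s (i + j)) • S.br a b (D c) = D (S.br a b c)

/-- Homogeneous generalized `n`-derivation of degree `s`, with associated maps `D' D'' D'''`. -/
def IsGenDer (S : DJLSTS k M δ) (n : ℕ) (s : ZMod 2) (D D' D'' D''' : M →ₗ[k] M) : Prop :=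
  IsHomog S s D ∧ IsHomog S s D' ∧ IsHomog S s D'' ∧ IsHomog S s D''' ∧
  ∀ {i j : ZMod 2} {a b : M}, a ∈ S.grade i → b ∈ S.grade j → ∀ c : M,
    δ ^ n • S.br (D a) b c + (δ ^ n * sgn k s i) • S.br a (D' b) c
      + (δ ^ n * sgn k s (i + j)) • S.br a b (D'' c) = D''' (S.br a b c)

/-- Membership in the `n`-centroid, for `D` homogeneous of degree `s`. -/
def IsCentroid (S : DJLSTS k M δ) (n : ℕ) (s : ZMod 2) (D : M →ₗ[k] M) : Prop :=
  IsHomog S s D ∧ ∀ {i j : ZMod 2} {a b : M}, a ∈ S.grade i → b ∈ S.grade j → ∀ c : M,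
    δ ^ n • S.br (D a) b c = D (S.br a b c) ∧
    (δ ^ n * sgn k s i) • S.br a (D b) c = D (S.br a b c) ∧
    (δ ^ n * sgn k s (i + j)) • S.br a b (D c) = D (S.br a b c)

/-- Membership in the quasicentroid, for `D` homogeneous of degree `s`. -/
def IsQC (S : DJLSTS k M δ) (s : ZMod 2) (D : M →ₗ[k] M) : Prop :=
  IsHomog S s D ∧ ∀ a b c : M, D (S.br a b c) = S.br (D a) b c

/-- Central derivation. -/
def IsZDer (S : DJLSTS k M δ) (D : M →ₗ[k] M) : Prop :=
  ∀ a b c : M, D (S.br a b c) = 0 ∧ S.br (D a) b c = 0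

/-- The operator `D(a,b) = (-1)^{|a||b|}θ(b,a) - δθ(a,b)` attached to a bilinear map `θ`,
where `i, j` are the degrees of `a, b`. -/
def Dop (δ : k) (θ : M →ₗ[k] M →ₗ[k] W →ₗ[k] W) (i j : ZMod 2) (a b : M) : W →ₗ[k] W :=
  sgn k i j • θ b a - δ • θ a b

/-- A representation of a `δ`-Jordan Lie supertriple system `S` on a
`ℤ/2`-graded vector space `V`. -/
structure DJRep (S : DJLSTS k M δ) (V : Type) [AddCommGroup V] [Module k V] where
  Vgrade : ZMod 2 → Submodule k V
  Vdirect : DirectSum.IsInternal Vgrade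
  θ : M →ₗ[k] M →ₗ[k] V →ₗ[k] V
  θ_grade : ∀ {i j n : ZMod 2} {a b : M} {v : V},
      a ∈ S.grade i → b ∈ S.grade j → v ∈ Vgrade n → θ a b v ∈ Vgrade (i + j + n)
  rep1 : ∀ {i j l m : ZMod 2} {a b c d : M},
      a ∈ S.grade i → b ∈ S.grade j → c ∈ S.grade l → d ∈ S.grade m → ∀ v : V,
      sgn k (i + j) (l + m) • θ c d (θ a b v)
        - (δ * sgn k i j * sgn k m (l + i)) • θ b d (θ a c v)
        - θ a (S.br b c d) v + sgn k i (j + l) • Dop δ θ j l b c (θ a d v) = 0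
  rep2 : ∀ {i j l m : ZMod 2} {a b c d : M},
      a ∈ S.grade i → b ∈ S.grade j → c ∈ S.grade l → d ∈ S.grade m → ∀ v : V,
      (δ * sgn k (i + j) (l + m)) • θ c d (Dop δ θ i j a b v)
        - δ • Dop δ θ i j a b (θ c d v)
        + θ (S.br a b c) d v + (δ * sgn k l (i + j)) • θ c (S.br a b d) v = 0
  rep3 : ∀ {i j l m : ZMod 2} {a b c d : M},
      a ∈ S.grade i → b ∈ S.grade j → c ∈ S.grade l → d ∈ S.grade m → ∀ v : V,
      Dop δ θ (i + j + l) m (S.br a b c) d v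
        + sgn k l (i + j) • Dop δ θ l (i + j + m) c (S.br a b d) v
        - δ • Dop δ θ i j a b (Dop δ θ l m c d v)
        + sgn k (i + j) (l + m) • Dop δ θ l m c d (Dop δ θ i j a b v) = 0

/-- The coboundary `d¹` of a `1`-cochain `f` of degree `s`, as a function of the degrees
`i j l` and the (homogeneous) arguments. -/
def d1 (S : DJLSTS k M δ) (R : DJRep S W) (s : ZMod 2) (f : M →ₗ[k] W) :
    ZMod 2 → ZMod 2 → ZMod 2 → M → M → M → W := fun i j l x₁ x₂ x₃ =>
  sgn k (s + i) (j + l) • R.θ x₂ x₃ (f x₁) - f (S.br x₁ x₂ x₃)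
    + (δ * sgn k s (i + j)) • Dop δ R.θ i j x₁ x₂ (f x₃)
    - (δ * sgn k j l * sgn k s (i + l)) • R.θ x₁ x₃ (f x₂)

/-- The coboundary `d³` of a `3`-cochain `g` of degree `s` (given together with the
degrees of its arguments), as a function of the degrees and the (homogeneous) arguments. -/
def d3 (S : DJLSTS k M δ) (R : DJRep S W) (s : ZMod 2)
    (g : ZMod 2 → ZMod 2 → ZMod 2 → M → M → M → W) :
    ZMod 2 → ZMod 2 → ZMod 2 → ZMod 2 → ZMod 2 → M → M → M → M → M → W :=
  fun i₁ i₂ i₃ i₄ i₅ x₁ x₂ x₃ x₄ x₅ =>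
    sgn k (s + i₁ + i₂ + i₃) (i₄ + i₅) • R.θ x₄ x₅ (g i₁ i₂ i₃ x₁ x₂ x₃)
    - (δ * sgn k (s + i₁ + i₂) (i₃ + i₅) * sgn k i₄ i₅) • R.θ x₃ x₅ (g i₁ i₂ i₄ x₁ x₂ x₄)
    - (δ * sgn k s (i₁ + i₂)) • Dop δ R.θ i₁ i₂ x₁ x₂ (g i₃ i₄ i₅ x₃ x₄ x₅)
    + sgn k (s + i₁ + i₂) (i₃ + i₄) • Dop δ R.θ i₃ i₄ x₃ x₄ (g i₁ i₂ i₅ x₁ x₂ x₅)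
    + g (i₁ + i₂ + i₃) i₄ i₅ (S.br x₁ x₂ x₃) x₄ x₅
    - g i₁ i₂ (i₃ + i₄ + i₅) x₁ x₂ (S.br x₃ x₄ x₅)
    + sgn k i₃ (i₁ + i₂) • g i₃ (i₁ + i₂ + i₄) i₅ x₃ (S.br x₁ x₂ x₄) x₅
    + (δ * sgn k (i₁ + i₂) (i₃ + i₄)) • g i₃ i₄ (i₁ + i₂ + i₅) x₃ x₄ (S.br x₁ x₂ x₅)

/-- An even trilinear map `ψ` is a `3`-cocycle of `S` (with respect to the adjoint
representation): `d³ψ = 0`, written out explicitly. -/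
def IsCocycle3 (S : DJLSTS k M δ) (ψ : M →ₗ[k] M →ₗ[k] M →ₗ[k] M) : Prop :=
  ∀ {i₁ i₂ i₃ i₄ : ZMod 2} {x₁ x₂ x₃ x₄ : M},
    x₁ ∈ S.grade i₁ → x₂ ∈ S.grade i₂ → x₃ ∈ S.grade i₃ → x₄ ∈ S.grade i₄ → ∀ x₅ : M,
    S.br x₁ x₂ (ψ x₃ x₄ x₅) + ψ x₁ x₂ (S.br x₃ x₄ x₅)
      = S.br (ψ x₁ x₂ x₃) x₄ x₅ + ψ (S.br x₁ x₂ x₃) x₄ x₅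
        + sgn k i₃ (i₁ + i₂) • (S.br x₃ (ψ x₁ x₂ x₄) x₅ + ψ x₃ (S.br x₁ x₂ x₄) x₅)
        + (δ * sgn k (i₁ + i₂) (i₃ + i₄))
            • (S.br x₃ x₄ (ψ x₁ x₂ x₅) + ψ x₃ x₄ (S.br x₁ x₂ x₅))

/-- A 1-parameter formal deformation `f_t = ∑ fᵢ tⁱ` of `S`, recorded by its sequence of
coefficients, satisfying equations (4.5)–(4.8). -/
def IsDeformation (S : DJLSTS k M δ) (F : ℕ → (M →ₗ[k] M →ₗ[k] M →ₗ[k] M)) : Prop :=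
  F 0 = S.br ∧
  (∀ (p : ℕ) {i j l : ZMod 2} {a b c : M},
      a ∈ S.grade i → b ∈ S.grade j → c ∈ S.grade l → F p a b c ∈ S.grade (i + j + l)) ∧
  (∀ (p : ℕ) {i j : ZMod 2} {a b : M}, a ∈ S.grade i → b ∈ S.grade j → ∀ c : M,
      F p b a c = -((δ * sgn k i j) • F p a b c)) ∧
  (∀ (p : ℕ) {i j l : ZMod 2} {a b c : M},
      a ∈ S.grade i → b ∈ S.grade j → c ∈ S.grade l →
      sgn k i l • F p a b c + sgn k j i • F p b c a + sgn k l j • F p c a b = 0) ∧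
  (∀ (n : ℕ) {i j l m : ZMod 2} {a b c d : M},
      a ∈ S.grade i → b ∈ S.grade j → c ∈ S.grade l → d ∈ S.grade m → ∀ e : M,
      ∑ p ∈ Finset.range (n + 1), F p a b (F (n - p) c d e)
        = ∑ p ∈ Finset.range (n + 1),
            (F p (F (n - p) a b c) d e
              + sgn k l (i + j) • F p c (F (n - p) a b d) e
              + (δ * sgn k (i + j) (l + m)) • F p c d (F (n - p) a b e)))

/-- Equivalence of two formal deformations via a formal isomorphism
`φ_t = ∑ φᵢ tⁱ` with `φ₀ = id`: `φ_t ∘ f_t = f'_t ∘ (φ_t × φ_t × φ_t)` coefficientwise. -/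
def DefEquiv (S : DJLSTS k M δ) (F F' : ℕ → (M →ₗ[k] M →ₗ[k] M →ₗ[k] M))
    (φ : ℕ → (M →ₗ[k] M)) : Prop :=
  φ 0 = LinearMap.id ∧
  ∀ (n : ℕ) (x₁ x₂ x₃ : M),
    ∑ p ∈ Finset.range (n + 1), φ p (F (n - p) x₁ x₂ x₃)
      = ∑ q ∈ Finset.Nat.antidiagonalTuple 4 n,
          F' (q 0) (φ (q 1) x₁) (φ (q 2) x₂) (φ (q 3) x₃)

/-- Nijenhuis operator on a `δ`-Jordan Lie supertriple system. -/
def IsNijenhuis (S : DJLSTS k M δ) (N : M →ₗ[k] M) : Prop :=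
  (∀ x₁ x₂ x₃ : M, S.br (N x₁) (N x₂) (N x₃) = 0) ∧
  (∀ x₁ x₂ x₃ : M,
    N (N (S.br x₁ x₂ x₃))
      = N (S.br (N x₁) x₂ x₃) + N (S.br x₁ (N x₂) x₃) + N (S.br x₁ x₂ (N x₃))
        - S.br (N x₁) (N x₂) x₃ - S.br x₁ (N x₂) (N x₃) - S.br (N x₁) x₂ (N x₃))

lemma sgn_comm (i j : ZMod 2) : sgn k i j = sgn k j i := by
  rw [sgn, sgn, Nat.mul_comm]

lemma sgn_add_right (i j l : ZMod 2) : sgn k i (j + l) = sgn k i j * sgn k i l := by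
  rw [sgn, sgn, sgn, ← pow_add, neg_one_pow_eq_pow_mod_two,
    neg_one_pow_eq_pow_mod_two (n := _ + _), ZMod.val_add, Nat.mul_mod, Nat.mod_mod,
    ← Nat.mul_mod, ← Nat.mul_add]

lemma sgn_add_left (i j l : ZMod 2) : sgn k (i + j) l = sgn k i l * sgn k j l := by
  rw [sgn_comm, sgn_add_right, sgn_comm l, sgn_comm l]

lemma sgn_eq_one_or_neg_one (i j : ZMod 2) : sgn k i j = 1 ∨ sgn k i j = -1 :=
  neg_one_pow_eq_or k _

section
variable {S : DJLSTS k M δ}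

lemma IsHomog.scomm {s₁ s₂ : ZMod 2} {D₁ D₂ : M →ₗ[k] M}
    (h₁ : IsHomog S s₁ D₁) (h₂ : IsHomog S s₂ D₂) :
    IsHomog S (s₁ + s₂) (scomm s₁ s₂ D₁ D₂) := by
  intro i a ha
  have h₁₂ : D₁ (D₂ a) ∈ S.grade (s₁ + s₂ + i) := by
    simpa only [add_assoc] using h₁ _ _ (h₂ i a ha)
  have h₂₁ : D₂ (D₁ a) ∈ S.grade (s₁ + s₂ + i) := by
    simpa only [add_left_comm, add_assoc] using h₂ _ _ (h₁ i a ha)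
  exact sub_mem h₁₂ (Submodule.smul_mem _ _ h₂₁)

variable {n₁ n₂ : ℕ} {s₁ s₂ : ZMod 2} {D₁ D₁' D₁'' D₁''' D₂ D₂' D₂'' D₂''' : M →ₗ[k] M}

lemma IsGenDer.apply_apply_br (h₁ : IsGenDer S n₁ s₁ D₁ D₁' D₁'' D₁''')
    (h₂ : IsGenDer S n₂ s₂ D₂ D₂' D₂'' D₂''') {i j : ZMod 2} {a b : M}
    (ha : a ∈ S.grade i) (hb : b ∈ S.grade j) (c : M) :
    D₁''' (D₂''' (S.br a b c)) = δ ^ (n₁ + n₂) • (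
      (S.br (D₁ (D₂ a)) b c + sgn k s₁ (s₂ + i) • S.br (D₂ a) (D₁' b) c
        + sgn k s₁ (s₂ + i + j) • S.br (D₂ a) b (D₁'' c))
      + sgn k s₂ i • (S.br (D₁ a) (D₂' b) c + sgn k s₁ i • S.br a (D₁' (D₂' b)) c
        + sgn k s₁ (i + (s₂ + j)) • S.br a (D₂' b) (D₁'' c))
      + sgn k s₂ (i + j) • (S.br (D₁ a) b (D₂'' c) + sgn k s₁ i • S.br a (D₁' b) (D₂'' c)
        + sgn k s₁ (i + j) • S.br a b (D₁'' (D₂'' c)))) := by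
  obtain ⟨-, -, -, -, e₁⟩ := h₁
  obtain ⟨hD₂, hD₂', -, -, e₂⟩ := h₂
  rw [← e₂ ha hb c]
  simp only [map_add, map_smul, ← e₁ (hD₂ i a ha) hb c, ← e₁ ha (hD₂' j b hb) c,
    ← e₁ ha hb (D₂'' c)]
  module

/-- the supercommutator of a generalized `n₁`-derivation and a generalized
`n₂`-derivation is a generalized `(n₁+n₂)`-derivation with the supercommutators of the
associated maps as its associated maps. -/
theorem stmt3 (S : DJLSTS k M δ) {n₁ n₂ : ℕ} {s₁ s₂ : ZMod 2}
    {D₁ D₁' D₁'' D₁''' D₂ D₂' D₂'' D₂''' : M →ₗ[k] M}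
    (h₁ : IsGenDer S n₁ s₁ D₁ D₁' D₁'' D₁''')
    (h₂ : IsGenDer S n₂ s₂ D₂ D₂' D₂'' D₂''') :
    IsGenDer S (n₁ + n₂) (s₁ + s₂) (scomm s₁ s₂ D₁ D₂) (scomm s₁ s₂ D₁' D₂')
      (scomm s₁ s₂ D₁'' D₂'') (scomm s₁ s₂ D₁''' D₂''') := by
  refine ⟨h₁.1.scomm h₂.1, h₁.2.1.scomm h₂.2.1, h₁.2.2.1.scomm h₂.2.2.1,
    h₁.2.2.2.1.scomm h₂.2.2.2.1, fun {i j a b} ha hb c => ?_⟩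
  have e₁₂ := h₁.apply_apply_br h₂ ha hb c
  have e₂₁ := h₂.apply_apply_br h₁ ha hb c
  simp only [scomm, LinearMap.sub_apply, LinearMap.smul_apply, LinearMap.comp_apply,
    map_sub, map_smul]
  simp only [sgn_add_right, sgn_add_left, add_comm n₂ n₁, sgn_comm s₂ s₁] at e₁₂ e₂₁ ⊢
  -- `module` cannot use `(sgn k s₁ s₂) ^ 2 = 1`, hence the substitution of `±1`.
  linear_combination (norm := skip) sgn k s₁ s₂ • e₂₁ - e₁₂
  rcases sgn_eq_one_or_neg_one (k := k) s₁ s₂ with hσ | hσ <;> rw [hσ] <;> module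
end
end

section
/- The set ZDer(T) of central derivations of a δ-Jordan Lie supertriple system T is an ideal of the derivation algebra Der(T) under the supercommutator: for D₁ ∈ ZDer(T) and D₂ ∈ Der_k(T), the bracket [D₁,D₂] = D₁D₂ - (-1)^{|D₁||D₂|}D₂D₁ lies in ZDer(T). -/
variable {k : Type} [Field k] {M : Type} [AddCommGroup M] [Module k M] {δ : k}
variable {W : Type} [AddCommGroup W] [Module k W]

/-! A derivation `D₂` sends brackets to sums of brackets, so `D₁ D₂` kills all brackets;
and it preserves the homogeneous left annihilator `{x | [x, T, T] = 0}`, which contains the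
image of `D₁`, so `[D₂ D₁ a, b, c] = 0`. -/

namespace DJLSTS

theorem delta_ne_zero (S : DJLSTS k M δ) : δ ≠ 0 := by
  rcases S.delta_pm with rfl | rfl <;> norm_num

theorem induction_on (S : DJLSTS k M δ) {motive : M → Prop} (a : M)
    (homog : ∀ i, ∀ x ∈ S.grade i, motive x)
    (add : ∀ x y, motive x → motive y → motive (x + y)) : motive a :=
  Submodule.iSup_induction (motive := motive) S.grade
    (S.direct.submodule_iSup_eq_top ▸ Submodule.mem_top) homog (homog 0 0 (zero_mem _)) add

end DJLSTS

namespace IsDer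

variable {S : DJLSTS k M δ} {n : ℕ} {s : ZMod 2} {D : M →ₗ[k] M}

theorem map_br_mem (hD : IsDer S n s D) (K : Submodule k M) (hK : ∀ a b c, S.br a b c ∈ K)
    (a b c : M) : D (S.br a b c) ∈ K := by
  induction a using S.induction_on generalizing b with
  | homog i a ha =>
    induction b using S.induction_on with
    | homog j b hb =>
      rw [← hD.2 ha hb c]
      exact add_mem (add_mem (K.smul_mem _ (hK _ _ _)) (K.smul_mem _ (hK _ _ _)))
        (K.smul_mem _ (hK _ _ _))
    | add b b' hb hb' => simpa using add_mem hb hb'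
  | add a a' ha ha' => simpa using add_mem (ha b) (ha' b)

theorem br_map_eq_zero (hD : IsDer S n s D) {i : ZMod 2} {x : M} (hx : x ∈ S.grade i)
    (hx₀ : ∀ b c, S.br x b c = 0) (b c : M) : S.br (D x) b c = 0 := by
  induction b using S.induction_on with
  | homog j b hb =>
    have h := hD.2 hx hb c
    simp only [hx₀, map_zero, smul_zero, add_zero] at h
    exact (smul_eq_zero.mp h).resolve_left (pow_ne_zero n S.delta_ne_zero)
  | add b b' hb hb' => simp [hb, hb']

end IsDer

/-- `ZDer(T)` is an ideal of `Der(T)`: the supercommutator of a central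
derivation with a homogeneous `n`-derivation is a central derivation. -/
theorem stmt4 (S : DJLSTS k M δ) {n : ℕ} {s₁ s₂ : ZMod 2} {D₁ D₂ : M →ₗ[k] M}
    (h₁ : IsZDer S D₁) (h₁h : IsHomog S s₁ D₁) (h₂ : IsDer S n s₂ D₂) :
    IsZDer S (scomm s₁ s₂ D₁ D₂) := by
  have hD₁D₂ (a b c : M) : D₁ (D₂ (S.br a b c)) = 0 :=
    h₂.map_br_mem (LinearMap.ker D₁) (fun a b c => (h₁ a b c).1) a b c
  have hD₂D₁ (a b c : M) : S.br (D₂ (D₁ a)) b c = 0 := by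
    induction a using S.induction_on generalizing b with
    | homog i a ha => exact h₂.br_map_eq_zero (h₁h i a ha) (fun b c => (h₁ a b c).2) b c
    | add a a' ha ha' => simp [ha, ha']
  intro a b c
  simp [scomm, hD₁D₂, hD₂D₁, (h₁ a b c).1, (h₁ (D₂ a) b c).2]
end

section
/- Let f_t = Σ_{i≥0} f_i tⁱ be a 1-parameter formal deformation of a δ-Jordan Lie supertriple system T with f₀ = [·,·,·]. Then the infinitesimal f₁ is a 3-cocycle: d³f₁ = 0 with respect to the adjoint representation. -/
variable {k : Type} [Field k] {M : Type} [AddCommGroup M] [Module k M] {δ : k}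
variable {W : Type} [AddCommGroup W] [Module k W]

/-- The `t¹`-coefficient of the fundamental identity of `f_t`, i.e. `f₀f₁ + f₁f₀ = 0`. -/
theorem IsDeformation.fund_coeff_one {S : DJLSTS k M δ}
    {F : ℕ → (M →ₗ[k] M →ₗ[k] M →ₗ[k] M)} (hF : IsDeformation S F)
    {i j l m : ZMod 2} {a b c d : M} (ha : a ∈ S.grade i) (hb : b ∈ S.grade j)
    (hc : c ∈ S.grade l) (hd : d ∈ S.grade m) (e : M) :
    S.br a b (F 1 c d e) + F 1 a b (S.br c d e)
      = S.br (F 1 a b c) d e + F 1 (S.br a b c) d e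
        + sgn k l (i + j) • (S.br c (F 1 a b d) e + F 1 c (S.br a b d) e)
        + (δ * sgn k (i + j) (l + m)) • (S.br c d (F 1 a b e) + F 1 c d (S.br a b e)) := by
  have h := hF.2.2.2.2 1 ha hb hc hd e
  simp only [Finset.sum_range_succ, Finset.sum_range_zero, Nat.sub_self, Nat.sub_zero,
    zero_add, hF.1] at h
  linear_combination (norm := module) h

/-- the infinitesimal `f₁` of a 1-parameter formal deformation is a
3-cocycle with respect to the adjoint representation. -/
theorem stmt13 (S : DJLSTS k M δ) (F : ℕ → (M →ₗ[k] M →ₗ[k] M →ₗ[k] M))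
    (hF : IsDeformation S F) : IsCocycle3 S (F 1) :=
  fun h₁ h₂ h₃ h₄ x₅ => hF.fund_coeff_one h₁ h₂ h₃ h₄ x₅
end

section
/- If f_t and f'_t are two equivalent 1-parameter formal deformations of a δ-Jordan Lie supertriple system T via φ_t = Σ φ_i tⁱ with φ₀ = id, then f₁ - f'₁ = d¹φ₁; in particular the infinitesimals f₁ and f'₁ define the same class in H³_δ(T,T). -/
variable {k : Type} [Field k] {M : Type} [AddCommGroup M] [Module k M] {δ : k}
variable {W : Type} [AddCommGroup W] [Module k W]

theorem Fintype.sum_eq_one_iff_eq_single {ι : Type*} [Fintype ι] [DecidableEq ι] (x : ι → ℕ) :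
    ∑ i, x i = 1 ↔ ∃ i, x = Pi.single i 1 := by
  have h := Finsupp.sum_eq_one_iff (Finsupp.equivFunOnFinite.symm x)
  rw [Finsupp.sum_fintype _ _ (fun _ => rfl)] at h
  simpa [← Finsupp.equivFunOnFinite_symm_single, Finsupp.coe_equivFunOnFinite_symm] using h

theorem Pi.single_left_injective {ι R : Type*} [DecidableEq ι] [Zero R] {b : R} (hb : b ≠ 0) :
    Function.Injective (fun i : ι => (Pi.single i b : ι → R)) := fun i j hij => by
  by_contra hne
  simpa [Pi.single_apply, hne, hb] using congrFun hij i

theorem Finset.Nat.antidiagonalTuple_one_right (k : ℕ) :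
    antidiagonalTuple k 1 = univ.map ⟨fun i => Pi.single i 1, Pi.single_left_injective one_ne_zero⟩ := by
  ext x
  simp [mem_antidiagonalTuple, Fintype.sum_eq_one_iff_eq_single, eq_comm]

theorem Finset.Nat.sum_antidiagonalTuple_one_right {A : Type*} [AddCommMonoid A] (k : ℕ)
    (f : (Fin k → ℕ) → A) :
    ∑ q ∈ antidiagonalTuple k 1, f q = ∑ i, f (Pi.single i 1) := by
  rw [antidiagonalTuple_one_right, sum_map]
  rfl

/-- The coefficient of `t` in `φ_t ∘ f_t = f'_t ∘ (φ_t × φ_t × φ_t)`. -/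
theorem DefEquiv.coeff_one {S : DJLSTS k M δ} {F F' : ℕ → (M →ₗ[k] M →ₗ[k] M →ₗ[k] M)}
    {φ : ℕ → (M →ₗ[k] M)} (h : DefEquiv S F F' φ) (x₁ x₂ x₃ : M) :
    F 1 x₁ x₂ x₃ + φ 1 (F 0 x₁ x₂ x₃)
      = F' 1 x₁ x₂ x₃ + F' 0 (φ 1 x₁) x₂ x₃ + F' 0 x₁ (φ 1 x₂) x₃ + F' 0 x₁ x₂ (φ 1 x₃) := by
  have h₁ := h.2 1 x₁ x₂ x₃
  simp only [Finset.sum_range_succ, Finset.range_zero, Finset.sum_empty, zero_add,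
    Finset.Nat.sum_antidiagonalTuple_one_right, Fin.sum_univ_four] at h₁
  simpa [h.1, Pi.single_apply, add_assoc] using h₁

/-- equivalent deformations have cohomologous infinitesimals:
`f₁ - f'₁ = d¹φ₁`. -/
theorem stmt14 (S : DJLSTS k M δ) (F F' : ℕ → (M →ₗ[k] M →ₗ[k] M →ₗ[k] M))
    (hF : IsDeformation S F) (hF' : IsDeformation S F')
    (φ : ℕ → (M →ₗ[k] M)) (h : DefEquiv S F F' φ) :
    ∀ x₁ x₂ x₃ : M,
      F 1 x₁ x₂ x₃ - F' 1 x₁ x₂ x₃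
        = S.br (φ 1 x₁) x₂ x₃ + S.br x₁ (φ 1 x₂) x₃ + S.br x₁ x₂ (φ 1 x₃)
            - φ 1 (S.br x₁ x₂ x₃) := by
  intro x₁ x₂ x₃
  have h₁ := h.coeff_one x₁ x₂ x₃
  rw [hF.1, hF'.1] at h₁
  rw [eq_sub_iff_add_eq, sub_add_eq_add_sub, h₁]
  abel
end
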